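/- arXiv:2102.01167 — 2 statements merged into one kernel-verified Lean document; each statement's English description precedes it below -/
import Mathlib

section
/- If x is a self-ancestor of y and z strongly sees y, then z strongly sees x. -/
/-- A hashgraph setting: `N` peers, a ternary parents relation
`parents e f g` meaning `e` is the self-parent and `f` the other-parent
of `g`, and a creator function. -/
structure HG (event peer : Type) where
  N : ℕ
  parents : event → event → event → Prop
  creator : event → peer

namespace HG

variable {event peer : Type}

/-- `x` is the self-parent of `y`. -/
def selfParent (H : HG event peer) (x y : event) : Prop := ∃ z, H.parents x z y

/-- `x` is a parent (self- or other-) of `y`. -/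
def parent (H : HG event peer) (x y : event) : Prop :=
  ∃ z, H.parents x z y ∨ H.parents z x y

/-- Ancestor relation `x ≤ y`. -/
def anc (H : HG event peer) : event → event → Prop := Relation.ReflTransGen H.parent

/-- Strict ancestor relation `x < y`. -/
def sanc (H : HG event peer) : event → event → Prop := Relation.TransGen H.parent

/-- Self-ancestor relation `x ⊑ y`. -/
def selfAnc (H : HG event peer) : event → event → Prop := Relation.ReflTransGen H.selfParent

/-- Strict self-ancestor relation `x ⊏ y`. -/
def strictSelfAnc (H : HG event peer) : event → event → Prop := Relation.TransGen H.selfParent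

/-- An initial event has no parents. -/
def initial (H : HG event peer) (x : event) : Prop := ¬ ∃ u v, H.parents u v x

/-- `x` and `y` form a fork: same creator, neither a self-ancestor of the other. -/
def fork (H : HG event peer) (x y : event) : Prop :=
  H.creator x = H.creator y ∧ ¬ H.selfAnc x y ∧ ¬ H.selfAnc y x

/-- `y` sees `x` (`x ⊴ y`). -/
def sees (H : HG event peer) (x y : event) : Prop :=
  H.anc x y ∧
    ¬ ∃ z z', H.fork z z' ∧ H.anc z y ∧ H.anc z' y ∧ H.creator z = H.creator x

/-- `n` is a supermajority of the `N` peers: `n > (2/3)·N`. -/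
def supermajor (H : HG event peer) (n : ℕ) : Prop := 2 * H.N < 3 * n

/-- `y` strongly sees `x` (`x ≪ y`): there are intermediaries, on a
supermajority of the peers, each of which sees `x` and is an ancestor of `y`. -/
def stsees (H : HG event peer) (x y : event) : Prop :=
  ∃ C : Finset peer, H.supermajor C.card ∧
    ∀ p ∈ C, ∃ z, H.creator z = p ∧ H.sees x z ∧ H.anc z y

end HG

/-- Round assignment: initial events are round 0; an event advances past the
max of its parents' rounds iff it strongly sees round-max events on a
supermajority of peers (the third case affirmatively states the negation,
via a superminority of peers all of whose strongly-seen events are earlier). -/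
inductive Round {event peer : Type} (H : HG event peer) : ℕ → event → Prop
  | initial {x : event} : H.initial x → Round H 0 x
  | advance {x y z : event} {m n : ℕ} (C : Finset peer) (wit : peer → event) :
      H.parents y z x → Round H m y → Round H n z →
      H.supermajor C.card →
      (∀ p, p ∈ C → H.creator (wit p) = p) →
      (∀ p, p ∈ C → H.stsees (wit p) x) →
      (∀ p, p ∈ C → Round H (max m n) (wit p)) →
      Round H (max m n + 1) x
  | stay {x y z : event} {m n : ℕ} (A : Finset peer) (r : event → ℕ) :
      H.parents y z x → Round H m y → Round H n z →
      H.N ≤ 3 * A.card →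
      (∀ p, p ∈ A → ∀ w, H.creator w = p → H.stsees w x → r w < max m n) →
      (∀ p, p ∈ A → ∀ w, H.creator w = p → H.stsees w x → Round H (r w) w) →
      Round H (max m n) x

/-- A round-`n` witness: an event of round `n` none of whose strict
self-ancestors is in round `n`. -/
def rwitness {event peer : Type} (H : HG event peer) (n : ℕ) (x : event) : Prop :=
  Round H n x ∧ ∀ y, H.strictSelfAnc y x → ¬ Round H n y

/-- The round-`n` witnesses strongly seen by `y`: these send votes to `y`. -/
def elector {event peer : Type} (H : HG event peer) (n : ℕ) (y w : event) : Prop :=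
  rwitness H n w ∧ H.stsees w y

/-- `election elec V t f`: among the events satisfying `elec`,
`t` vote true and `f` vote false (and all votes are accounted for). -/
def election {event : Type} (elec : event → Prop) (V : event → Bool → Prop)
    (t f : ℕ) : Prop :=
  ∃ E T F : Finset event,
    (∀ w, w ∈ E ↔ elec w) ∧ E.card = t + f ∧ T.card = t ∧ F.card = f ∧
    (∀ w ∈ T, elec w ∧ V w true) ∧ (∀ w ∈ F, elec w ∧ V w false)

/-- `vote` is a fixed point of the Hashgraph voting rules with first regular
round parameter `d`, coin frequency `c`, and coin `coin`. -/
def voteFix {event peer : Type} (H : HG event peer) (d c : ℕ) (coin : event → Bool)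
    (vote : event → event → Bool → Prop) : Prop :=
  ∀ x y v, vote x y v ↔
    ((∃ m n, rwitness H m x ∧ rwitness H n y ∧ m < n ∧ n ≤ m + d ∧
        (v = true ↔ H.sanc x y)) ∨
     (∃ m n t f, rwitness H m x ∧ rwitness H n y ∧ m + d < n ∧ (n - m) % c ≠ 0 ∧
        election (elector H (n - 1) y) (vote x) t f ∧
        ((f ≤ t ∧ v = true) ∨ (t < f ∧ v = false))) ∨
     (∃ m n t f, rwitness H m x ∧ rwitness H n y ∧ m < n ∧ (n - m) % c = 0 ∧
        election (elector H (n - 1) y) (vote x) t f ∧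
        H.supermajor (if v then t else f)) ∨
     (∃ m n t f, rwitness H m x ∧ rwitness H n y ∧ m < n ∧ (n - m) % c = 0 ∧
        election (elector H (n - 1) y) (vote x) t f ∧
        3 * t ≤ 2 * H.N ∧ 3 * f ≤ 2 * H.N ∧ v = coin y))

/-- `y` decides `b` on `x`'s fame: in a non-coin round more than `d` rounds
after `x`'s, `y` receives more than `2N/3` votes of value `b`. -/
def decision {event peer : Type} (H : HG event peer) (d c : ℕ)
    (vote : event → event → Bool → Prop) (x y : event) (b : Bool) : Prop :=
  ∃ i j t f, rwitness H i x ∧ rwitness H j y ∧ i + d < j ∧ (j - i) % c ≠ 0 ∧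
    election (elector H (j - 1) y) (vote x) t f ∧
    ((b = true ∧ H.supermajor t) ∨ (b = false ∧ H.supermajor f))

lemma selfAnc_anc {event peer : Type} (H : HG event peer) {x y : event}
    (h : H.selfAnc x y) : H.anc x y := by
  induction h with
  | refl => exact Relation.ReflTransGen.refl
  | tail _ hp ih => exact ih.tail ⟨_, Or.inl hp.choose_spec⟩

lemma selfAnc_creator {event peer : Type} (H : HG event peer)
    (hpc : ∀ e f g, H.parents e f g → H.creator e = H.creator g)
    {x y : event} (h : H.selfAnc x y) : H.creator x = H.creator y := by
  induction h with
  | refl => rfl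
  | tail _ hp ih => exact ih.trans (hpc _ _ _ hp.choose_spec)

/-- If `x` is a self-ancestor of `y` and `z` strongly sees `y`, then `z` strongly sees `x`. -/
theorem selfAnc_stsees {event peer : Type} (H : HG event peer)
    (hpc : ∀ e f g, H.parents e f g → H.creator e = H.creator g)
    (x y z : event) (h1 : H.selfAnc x y) (h2 : H.stsees y z) :
    H.stsees x z := by
  obtain ⟨C, hC, hw⟩ := h2
  refine ⟨C, hC, fun p hp => ?_⟩
  obtain ⟨w, hcw, ⟨hay, hnf⟩, haz⟩ := hw p hp
  refine ⟨w, hcw, ⟨(selfAnc_anc H h1).trans hay, ?_⟩, haz⟩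
  rw [selfAnc_creator H hpc h1]
  exact hnf
end

section
/- (Broadcast) For every honest event x, there exists an honest event y such that for every honest peer a there is an event z created by a with x ≤ z ≤ y. -/
/-!
An honest peer never forks, and the spawn order forbids a later event from being an ancestor of
an earlier one, so each honest peer's events are ordered by self-ancestry in spawn order.
Synchronization therefore lets any honest event `y` reach any honest peer `a`: pick an event of
`creator y` spawned after `y` that is a strict ancestor of an event of `a`; it lies above `y`.
Adding the honest peers one at a time, each time moving to such a descendant, yields a single
honest event above an event of every honest peer, all of them above `x`.
-/

namespace HG

variable {event peer : Type} (H : HG event peer)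

variable {H} in
theorem selfAnc.anc {u v : event} (h : H.selfAnc u v) : H.anc u v :=
  Relation.ReflTransGen.mono (fun _ _ ⟨w, hw⟩ => ⟨w, Or.inl hw⟩) u v h

variable {spawn : ℕ → event}

theorem exists_spawn_le_of_anc_spawn
    (hparent : ∀ x i, H.parent x (spawn i) → ∃ j, x = spawn j ∧ j < i)
    {u : event} {m : ℕ} (h : H.anc u (spawn m)) : ∃ j, u = spawn j ∧ j ≤ m := by
  induction h using Relation.ReflTransGen.head_induction_on with
  | refl => exact ⟨m, rfl, le_rfl⟩
  | head hp _ ih =>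
    obtain ⟨j', rfl, hj'm⟩ := ih
    obtain ⟨j, rfl, hjj'⟩ := hparent _ _ hp
    exact ⟨j, rfl, hjj'.le.trans hj'm⟩

theorem le_of_anc_spawn
    (hinj : ∀ i j, spawn i = spawn j → i = j)
    (hparent : ∀ x i, H.parent x (spawn i) → ∃ j, x = spawn j ∧ j < i)
    {i m : ℕ} (h : H.anc (spawn i) (spawn m)) : i ≤ m := by
  obtain ⟨j, hij, hjm⟩ := H.exists_spawn_le_of_anc_spawn hparent h
  exact hinj _ _ hij ▸ hjm

theorem selfAnc_spawn_of_lt {honest : Finset peer}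
    (hinj : ∀ i j, spawn i = spawn j → i = j)
    (hparent : ∀ x i, H.parent x (spawn i) → ∃ j, x = spawn j ∧ j < i)
    (hforks : ∀ i j, H.creator (spawn i) ∈ honest → ¬ H.fork (spawn i) (spawn j))
    {i j : ℕ} (hi : H.creator (spawn i) ∈ honest)
    (hcreator : H.creator (spawn i) = H.creator (spawn j)) (hij : i < j) :
    H.selfAnc (spawn i) (spawn j) := by
  by_contra hij'
  have hji : H.selfAnc (spawn j) (spawn i) := by
    by_contra hji
    exact hforks i j hi ⟨hcreator, hij', hji⟩
  exact absurd (H.le_of_anc_spawn hinj hparent hji.anc) hij.not_ge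

theorem exists_descendant_of_creator {honest : Finset peer}
    (hinj : ∀ i j, spawn i = spawn j → i = j)
    (hparent : ∀ x i, H.parent x (spawn i) → ∃ j, x = spawn j ∧ j < i)
    (hforks : ∀ i j, H.creator (spawn i) ∈ honest → ¬ H.fork (spawn i) (spawn j))
    (hsync : ∀ i a b, a ∈ honest → b ∈ honest → a ≠ b →
      ∃ j k, i ≤ j ∧ j ≤ k ∧ H.creator (spawn j) = a ∧ H.creator (spawn k) = b ∧
        H.sanc (spawn j) (spawn k))
    (hno_orphans : ∀ x : event, ∃ i, x = spawn i)
    {y : event} (hy : H.creator y ∈ honest) {a : peer} (ha : a ∈ honest) :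
    ∃ y', H.creator y' = a ∧ H.anc y y' := by
  by_cases hay : H.creator y = a
  · exact ⟨y, hay, .refl⟩
  obtain ⟨m, rfl⟩ := hno_orphans y
  obtain ⟨j, k, hmj, -, hj, hk, hjk⟩ := hsync (m + 1) _ a hy ha hay
  have hmj' : H.selfAnc (spawn m) (spawn j) :=
    H.selfAnc_spawn_of_lt hinj hparent hforks hy hj.symm hmj
  exact ⟨spawn k, hk, hmj'.anc.trans hjk.to_reflTransGen⟩

theorem exists_common_descendant {honest : Finset peer}
    (hreach : ∀ y, H.creator y ∈ honest → ∀ a ∈ honest, ∃ y', H.creator y' = a ∧ H.anc y y')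
    {x : event} (hx : H.creator x ∈ honest) {s : Finset peer} (hs : s ⊆ honest) :
    ∃ y, H.creator y ∈ honest ∧ H.anc x y ∧
      ∀ a ∈ s, ∃ z, H.creator z = a ∧ H.anc x z ∧ H.anc z y := by
  classical
  induction s using Finset.induction_on with
  | empty => exact ⟨x, hx, .refl, by simp⟩
  | @insert a s _ ih =>
    have ha : a ∈ honest := hs (Finset.mem_insert_self a s)
    obtain ⟨y, hy, hxy, hreached⟩ := ih ((Finset.subset_insert a s).trans hs)
    obtain ⟨y', hy'a, hyy'⟩ := hreach y hy a ha
    have hxy' : H.anc x y' := hxy.trans hyy'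
    refine ⟨y', hy'a ▸ ha, hxy', fun b hb => ?_⟩
    rcases Finset.mem_insert.mp hb with rfl | hb
    · exact ⟨y', hy'a, hxy', .refl⟩
    · obtain ⟨z, hzb, hxz, hzy⟩ := hreached b hb
      exact ⟨z, hzb, hxz, hzy.trans hyy'⟩

end HG

theorem broadcast_general {event peer : Type} (H : HG event peer)
    (honest : Finset peer) (spawn : ℕ → event)
    (hinj : ∀ i j, spawn i = spawn j → i = j)
    (hparent : ∀ x i, H.parent x (spawn i) → ∃ j, x = spawn j ∧ j < i)
    (hforks : ∀ i j, H.creator (spawn i) ∈ honest → ¬ H.fork (spawn i) (spawn j))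
    (hsync : ∀ i a b, a ∈ honest → b ∈ honest → a ≠ b →
      ∃ j k, i ≤ j ∧ j ≤ k ∧ H.creator (spawn j) = a ∧ H.creator (spawn k) = b ∧
        H.sanc (spawn j) (spawn k))
    (hno_orphans : ∀ x : event, ∃ i, x = spawn i)
    (x : event) (hx : H.creator x ∈ honest) :
    ∃ y, H.creator y ∈ honest ∧
      ∀ a ∈ honest, ∃ z, H.creator z = a ∧ H.anc x z ∧ H.anc z y := by
  have hreach := fun y (hy : H.creator y ∈ honest) a (ha : a ∈ honest) =>
    H.exists_descendant_of_creator hinj hparent hforks hsync hno_orphans hy ha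
  obtain ⟨y, hy, -, hreached⟩ := H.exists_common_descendant hreach hx subset_rfl
  exact ⟨y, hy, hreached⟩

/-- (Broadcast) For every honest event `x` there is an honest event `y` such that, in its ancestry, `x` has reached every honest peer. -/
theorem broadcast {event peer : Type} (H : HG event peer)
    (hpc : ∀ e f g, H.parents e f g → H.creator e = H.creator g)
    (honest : Finset peer) (spawn : ℕ → event)
    (hinj : ∀ i j, spawn i = spawn j → i = j)
    (hparent : ∀ x i, H.parent x (spawn i) → ∃ j, x = spawn j ∧ j < i)
    (hforks : ∀ i j, H.creator (spawn i) ∈ honest → ¬ H.fork (spawn i) (spawn j))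
    (hsync : ∀ i a b, a ∈ honest → b ∈ honest → a ≠ b →
      ∃ j k, i ≤ j ∧ j ≤ k ∧ H.creator (spawn j) = a ∧ H.creator (spawn k) = b ∧
        H.sanc (spawn j) (spawn k))
    (hno_orphans : ∀ x : event, ∃ i, x = spawn i)
    (x : event) (hx : H.creator x ∈ honest) :
    ∃ y, H.creator y ∈ honest ∧
      ∀ a ∈ honest, ∃ z, H.creator z = a ∧ H.anc x z ∧ H.anc z y :=
  broadcast_general H honest spawn hinj hparent hforks hsync hno_orphans x hx
end
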